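/- Let p be an irreducible element of degree 64 in the carry-less ring. The family CLNH composed with reduction mod p, namely s ↦ CLNH_k(s) mod p, indexed by uniformly random 64-bit keys k_1, ..., k_l, is XOR-universal over pairs of equal-length strings of l 64-bit words (l even): for distinct equal-length inputs s, s' and any 64-bit constant c, P(CLNH_k(s) mod p = (CLNH_k(s') mod p) ⊕ c) ≤ 1/2^{64}. -/

import Mathlib

/-!
Reading the bits of a natural number as coefficients identifies `ℕ` with `𝔽₂[X]`, turning `^^^`
into `+` and `clmul` into `*`. Then `clnh` becomes the pseudo-dot product
`∑ (s₂ᵢ + k₂ᵢ) (s₂ᵢ₊₁ + k₂ᵢ₊₁)` and reduction mod `p` becomes reduction modulo a prime polynomial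
`P` of degree 64. Let `s` and `s'` differ in word `t` and let `j` be the other index of its pair.
If two keys differing only in word `j` both satisfy the collision equation, subtracting the two
equations shows that `P` divides `(sₜ - s'ₜ) (kⱼ - k'ⱼ)`; both factors have degree `< 64`, so
`kⱼ = k'ⱼ`. Hence, for each choice of the other key words, at most one of the `2 ^ 64` values of
`kⱼ` gives a collision.
-/

open Classical in
noncomputable def prob {K : Type*} [Fintype K] (P : K → Prop) : ℝ :=
  ((Finset.univ.filter P).card : ℝ) / (Fintype.card K)

/-- Carry-less multiplication: `(a ⋆ b)ᵢ = ⨁ₖ a_{i-k} bₖ`. -/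
def clmul : ℕ → ℕ → ℕ
  | 0, _ => 0
  | a + 1, b => (if (a + 1) % 2 = 1 then b else 0) ^^^ 2 * clmul ((a + 1) / 2) b
termination_by a _ => a
decreasing_by simp_wf; omega

/-- CLNH: XOR over i of (s_{2i-1} ⊕ k_{2i-1}) ⋆ (s_{2i} ⊕ k_{2i}). -/
def clnh (n : ℕ) (k s : Fin (2 * n) → ℕ) : ℕ :=
  (List.ofFn fun i : Fin n =>
    clmul (s ⟨2 * i.1, by have := i.2; omega⟩ ^^^ k ⟨2 * i.1, by have := i.2; omega⟩)
      (s ⟨2 * i.1 + 1, by have := i.2; omega⟩ ^^^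
        k ⟨2 * i.1 + 1, by have := i.2; omega⟩)).foldr (· ^^^ ·) 0

open Polynomial

noncomputable def toPoly (n : ℕ) : (ZMod 2)[X] :=
  ∑ i ∈ Finset.range n.size, if n.testBit i then X ^ i else 0

theorem coeff_toPoly (n i : ℕ) : (toPoly n).coeff i = if n.testBit i then 1 else 0 := by
  have hbit : i ∉ Finset.range n.size → n.testBit i = false := fun h =>
    Nat.testBit_lt_two_pow ((Nat.lt_size_self n).trans_le
      (Nat.pow_le_pow_right two_pos (by simpa using h)))
  rw [toPoly, finsetSum_coeff, Finset.sum_eq_single i]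
  · split_ifs <;> simp
  · intro j _ hj
    split_ifs <;> simp [coeff_X_pow, Ne.symm hj]
  · intro hi
    simp [hbit hi]

theorem toPoly_injective : Function.Injective toPoly := fun a b h =>
  Nat.eq_of_testBit_eq fun i => by
    have := congrArg (coeff · i) h
    revert this
    simp only [coeff_toPoly]
    cases a.testBit i <;> cases b.testBit i <;> simp

theorem toPoly_xor (a b : ℕ) : toPoly (a ^^^ b) = toPoly a + toPoly b := by
  ext i
  simp only [coeff_add, coeff_toPoly, Nat.testBit_xor]
  cases a.testBit i <;> cases b.testBit i <;> rfl

theorem toPoly_two_pow (m : ℕ) : toPoly (2 ^ m) = X ^ m := by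
  ext i
  simp [coeff_toPoly, Nat.testBit_two_pow, coeff_X_pow, eq_comm]

theorem toPoly_one : toPoly 1 = 1 := by
  simpa using toPoly_two_pow 0

theorem toPoly_eq_add_X_mul_div_two (m : ℕ) :
    toPoly m = (if m % 2 = 1 then 1 else 0) + X * toPoly (m / 2) := by
  ext (_ | i)
  · by_cases h : m % 2 = 1 <;> simp [coeff_toPoly, h]
  · by_cases h : m % 2 = 1 <;> simp [coeff_toPoly, coeff_X_mul, Nat.testBit_succ, coeff_one, h]

theorem toPoly_clmul (a b : ℕ) : toPoly (clmul a b) = toPoly a * toPoly b := by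
  induction a using Nat.strong_induction_on with
  | _ a ih =>
    rcases a with _ | a
    · simp [clmul, toPoly]
    · have h2 : toPoly (2 * clmul ((a + 1) / 2) b) = X * toPoly (clmul ((a + 1) / 2) b) := by
        simpa using toPoly_eq_add_X_mul_div_two (2 * clmul ((a + 1) / 2) b)
      rw [clmul, toPoly_xor, h2, ih _ (by omega), toPoly_eq_add_X_mul_div_two (a + 1)]
      split_ifs <;> simp [toPoly] <;> ring

theorem toPoly_surjective : Function.Surjective toPoly := by
  intro f
  induction f using Polynomial.induction_on' with
  | add f g hf hg =>
    obtain ⟨a, rfl⟩ := hf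
    obtain ⟨b, rfl⟩ := hg
    exact ⟨a ^^^ b, toPoly_xor a b⟩
  | monomial i c =>
    match c with
    | 0 => exact ⟨0, by simp [toPoly]⟩
    | 1 => exact ⟨2 ^ i, by rw [toPoly_two_pow, X_pow_eq_monomial]⟩

theorem degree_toPoly_lt {m x : ℕ} (h : x < 2 ^ m) : (toPoly x).degree < m := by
  refine (degree_lt_iff_coeff_zero _ _).2 fun i hi => ?_
  have : x.testBit i = false :=
    Nat.testBit_lt_two_pow (h.trans_le (Nat.pow_le_pow_right two_pos (by exact_mod_cast hi)))
  simp [coeff_toPoly, this]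

theorem degree_toPoly {m p : ℕ} (h₁ : 2 ^ m ≤ p) (h₂ : p < 2 ^ (m + 1)) :
    (toPoly p).degree = m := by
  have hdiv : p / 2 ^ m = 1 :=
    Nat.div_eq_of_lt_le (by simpa using h₁) (by rw [pow_succ] at h₂; omega)
  refine degree_eq_of_le_of_coeff_ne_zero (Order.le_of_lt_succ (degree_toPoly_lt h₂)) ?_
  simp [coeff_toPoly, Nat.testBit_eq_decide_div_mod_eq, hdiv]

theorem degree_toPoly_sub_lt {m a b : ℕ} (ha : a < 2 ^ m) (hb : b < 2 ^ m) :
    (toPoly a - toPoly b).degree < m :=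
  (degree_sub_le _ _).trans_lt (max_lt (degree_toPoly_lt ha) (degree_toPoly_lt hb))

theorem irreducible_toPoly {p : ℕ} (hp : p ≠ 1) (hirr : ∀ a b : ℕ, clmul a b = p → a = 1 ∨ b = 1) :
    Irreducible (toPoly p) := by
  refine ⟨fun hu => hp ?_, fun f g hfg => ?_⟩
  · obtain ⟨r, hr, hrp⟩ := Polynomial.isUnit_iff.1 hu
    have : r = 1 := (by decide : ∀ r : ZMod 2, r ≠ 0 → r = 1) r hr.ne_zero
    exact toPoly_injective (by rw [← hrp, this, C_1, toPoly_one])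
  · obtain ⟨a, rfl⟩ := toPoly_surjective f
    obtain ⟨b, rfl⟩ := toPoly_surjective g
    rw [← toPoly_clmul] at hfg
    rcases hirr a b (toPoly_injective hfg).symm with rfl | rfl <;> simp [toPoly_one]

theorem toPoly_dvd_sub_of_eq_clmul_xor {a q b r : ℕ} (h : a = clmul q b ^^^ r) :
    toPoly b ∣ toPoly a - toPoly r :=
  ⟨toPoly q, by rw [h, toPoly_xor, toPoly_clmul]; ring⟩

section PseudoDot

variable {R : Type*} [CommRing R] {n : ℕ}

def pairFst (i : Fin n) : Fin (2 * n) := ⟨2 * i.1, by have := i.2; omega⟩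

def pairSnd (i : Fin n) : Fin (2 * n) := ⟨2 * i.1 + 1, by have := i.2; omega⟩

def pairMate (j : Fin (2 * n)) : Fin (2 * n) :=
  ⟨if j.1 % 2 = 0 then j.1 + 1 else j.1 - 1, by have := j.2; split <;> omega⟩

theorem pairMate_pairMate (j : Fin (2 * n)) : pairMate (pairMate j) = j :=
  Fin.ext (by simp only [pairMate]; split_ifs <;> omega)

def pseudoDot (n : ℕ) (k s : Fin (2 * n) → R) : R :=
  ∑ i : Fin n, (s (pairFst i) + k (pairFst i)) * (s (pairSnd i) + k (pairSnd i))

theorem pseudoDot_sub_sub_pseudoDot_sub {k k' : Fin (2 * n) → R} (s s' : Fin (2 * n) → R)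
    {j : Fin (2 * n)} (hk : ∀ i, i ≠ j → k' i = k i) :
    (pseudoDot n k s - pseudoDot n k s') - (pseudoDot n k' s - pseudoDot n k' s') =
      (s (pairMate j) - s' (pairMate j)) * (k j - k' j) := by
  have hj : j.1 / 2 < n := by have := j.2; omega
  have hmate : k' (pairMate j) = k (pairMate j) :=
    hk _ (Fin.ne_of_val_ne (by simp only [pairMate]; split <;> omega))
  simp only [pseudoDot, ← Finset.sum_sub_distrib]
  rw [Finset.sum_eq_single ⟨j.1 / 2, hj⟩ ?_ (by simp)]
  · by_cases hpar : j.1 % 2 = 0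
    · have h₀ : pairFst ⟨j.1 / 2, hj⟩ = j := Fin.ext (by simp only [pairFst]; omega)
      have h₁ : pairSnd ⟨j.1 / 2, hj⟩ = pairMate j :=
        Fin.ext (by simp [pairSnd, pairMate, hpar]; omega)
      rw [h₀, h₁, hmate]
      ring
    · have h₀ : pairFst ⟨j.1 / 2, hj⟩ = pairMate j :=
        Fin.ext (by simp [pairFst, pairMate, hpar]; omega)
      have h₁ : pairSnd ⟨j.1 / 2, hj⟩ = j := Fin.ext (by simp only [pairSnd]; omega)
      rw [h₀, h₁, hmate]
      ring
  · intro i _ hi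
    have hi' : i.1 ≠ j.1 / 2 := fun h => hi (Fin.ext h)
    rw [hk (pairFst i) (Fin.ne_of_val_ne (by simp only [pairFst]; omega)),
      hk (pairSnd i) (Fin.ne_of_val_ne (by simp only [pairSnd]; omega))]
    ring

end PseudoDot

theorem toPoly_foldr_xor (L : List ℕ) : toPoly (L.foldr (· ^^^ ·) 0) = (L.map toPoly).sum := by
  induction L with
  | nil => simp [toPoly]
  | cons a L ih => simp [toPoly_xor, ih]

theorem toPoly_clnh (n : ℕ) (k s : Fin (2 * n) → ℕ) :
    toPoly (clnh n k s) = pseudoDot n (fun i => toPoly (k i)) (fun i => toPoly (s i)) := by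
  simp only [clnh, toPoly_foldr_xor, List.map_ofFn, List.sum_ofFn, Function.comp_def,
    toPoly_clmul, toPoly_xor]
  rfl

theorem Polynomial.eq_zero_or_eq_zero_of_prime_dvd_mul {K : Type*} [Field K] {P f g : K[X]}
    (hP : Prime P) (h : P ∣ f * g) (hf : f.degree < P.degree) (hg : g.degree < P.degree) :
    f = 0 ∨ g = 0 :=
  (hP.dvd_or_dvd h).imp (eq_zero_of_dvd_of_degree_lt · hf) (eq_zero_of_dvd_of_degree_lt · hg)

theorem prob_le_inv_card_of_update {ι α : Type*} [Fintype ι] [DecidableEq ι] [Fintype α]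
    [Nonempty α] {E : (ι → α) → Prop} (j : ι)
    (hE : ∀ k v, E k → E (Function.update k j v) → v = k j) :
    prob E ≤ 1 / Fintype.card α := by
  classical
  have hinj : Function.Injective fun kv : {k // E k} × α => Function.update kv.1.1 j kv.2 := by
    rintro ⟨⟨k, hk⟩, v⟩ ⟨⟨k', hk'⟩, v'⟩ h
    have hv : v = v' := by simpa using congrFun h j
    have hk'k : k' = Function.update k j (k' j) := by
      ext i
      by_cases hi : i = j
      · simp [hi]
      · simpa [hi] using (congrFun h i).symm
    have hkk' : k = k' := by
      rw [hk'k, hE k (k' j) hk (hk'k ▸ hk'), Function.update_eq_self]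
    subst hv hkk'
    rfl
  have hcard := Fintype.card_le_of_injective _ hinj
  rw [Fintype.card_prod, Fintype.card_subtype] at hcard
  unfold prob
  rw [div_le_div_iff₀ (by positivity) (by positivity), one_mul]
  exact_mod_cast hcard

/-- CLNH followed by reduction modulo an irreducible p of degree 64 is
XOR-universal over equal-length strings of 2n 64-bit words. -/
theorem stmt16 (n : ℕ) (p : ℕ) (hpdeg : 2 ^ 64 ≤ p) (hpdeg' : p < 2 ^ 65)
    (hirr : ∀ a b : ℕ, clmul a b = p → a = 1 ∨ b = 1)
    (cldiv clmod : ℕ → ℕ → ℕ)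
    (hchar : ∀ a b : ℕ, b ≠ 0 →
      a = clmul (cldiv a b) b ^^^ clmod a b ∧ clmod a b < 2 ^ Nat.log2 b) :
    ∀ c < 2 ^ 64, ∀ s s' : Fin (2 * n) → Fin (2 ^ 64), s ≠ s' →
      prob (fun k : Fin (2 * n) → Fin (2 ^ 64) =>
        clmod (clnh n (fun i => (k i : ℕ)) (fun i => (s i : ℕ))) p =
          clmod (clnh n (fun i => (k i : ℕ)) (fun i => (s' i : ℕ))) p ^^^ c)
        ≤ 1 / 2 ^ 64 := by
  intro c _ s s' hss
  obtain ⟨t, ht⟩ := Function.ne_iff.1 hss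
  have hP : Prime (toPoly p) := (irreducible_toPoly (by omega) hirr).prime
  have hdeg : (toPoly p).degree = (64 : ℕ) := degree_toPoly hpdeg hpdeg'
  have hred (a : ℕ) : toPoly p ∣ toPoly a - toPoly (clmod a p) :=
    toPoly_dvd_sub_of_eq_clmul_xor (hchar a p (by omega)).1
  have hevent (k : Fin (2 * n) → ℕ)
      (hk : clmod (clnh n k (fun i => s i)) p = clmod (clnh n k (fun i => s' i)) p ^^^ c) :
      toPoly p ∣ pseudoDot n (fun i => toPoly (k i)) (fun i => toPoly (s i)) -
        pseudoDot n (fun i => toPoly (k i)) (fun i => toPoly (s' i)) - toPoly c := by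
    have := dvd_sub (hred (clnh n k (fun i => s i))) (hred (clnh n k (fun i => s' i)))
    rw [hk, toPoly_xor, toPoly_clnh, toPoly_clnh] at this
    convert this using 1
    ring
  refine (prob_le_inv_card_of_update (pairMate t) fun k v hk hkv => ?_).trans_eq (by norm_num)
  have hdvd : toPoly p ∣ (toPoly (s t) - toPoly (s' t)) * (toPoly (k (pairMate t)) - toPoly v) := by
    have hdiff := pseudoDot_sub_sub_pseudoDot_sub (fun i => toPoly (s i)) (fun i => toPoly (s' i))
      (k := fun i => toPoly (k i)) (k' := fun i => toPoly (Function.update k (pairMate t) v i))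
      (j := pairMate t)
      fun i hi => by simp [hi]
    simp only [pairMate_pairMate, Function.update_self] at hdiff
    rw [← hdiff]
    convert dvd_sub (hevent _ hk) (hevent _ hkv) using 1
    ring
  rcases Polynomial.eq_zero_or_eq_zero_of_prime_dvd_mul hP hdvd
      (hdeg ▸ degree_toPoly_sub_lt (s t).2 (s' t).2)
      (hdeg ▸ degree_toPoly_sub_lt (k _).2 v.2) with h | h
  · exact absurd (Fin.ext (toPoly_injective (sub_eq_zero.1 h))) ht
  · exact Fin.ext (toPoly_injective (sub_eq_zero.1 h)).symm
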